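/- Let C be an elementary cycle or an α-revived cycle with origin the trivial path e. Then φ_2(C)(ē) = w(C), and φ_2(C)(ū) = 0 for every path u ≠ e in KΔ. -/

import Mathlib

noncomputable section
open Classical

/-- A quiver, given by a type of vertices and a family of types of arrows. -/
structure QD : Type 1 where
  V : Type
  Ar : V → V → Type

namespace QD

variable {Q : QD}

/-- Oriented paths in a quiver, composed from left to right. -/
inductive Path (Q : QD) : Q.V → Q.V → Type
  | nil (i : Q.V) : Path Q i i
  | cons {i j k : Q.V} (a : Q.Ar i j) (p : Path Q j k) : Path Q i k

namespace Path

/-- Concatenation of paths. -/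
def comp : {i j k : Q.V} → Path Q i j → Path Q j k → Path Q i k
  | _, _, _, nil _, q => q
  | _, _, _, cons a p, q => cons a (comp p q)

/-- Length of a path. -/
def length : {i j : Q.V} → Path Q i j → ℕ
  | _, _, nil _ => 0
  | _, _, cons _ p => length p + 1

end Path

/-- A path bundled with its endpoints. -/
def PathIn (Q : QD) : Type := Σ i : Q.V, Σ j : Q.V, Path Q i j

/-- Bundle a path with its endpoints. -/
def Path.sig {i j : Q.V} (p : Path Q i j) : PathIn Q := ⟨i, j, p⟩

/-- The arrow `a` occurs in the path `p`. -/
def Path.arrowMem {i j : Q.V} (a : Q.Ar i j) : {u v : Q.V} → Path Q u v → Prop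
  | _, _, Path.nil _ => False
  | _, _, @Path.cons _ u u' _ b p =>
      (⟨u, u', b⟩ : Σ i : Q.V, Σ j : Q.V, Q.Ar i j) = ⟨i, j, a⟩ ∨ Path.arrowMem a p

end QD

/-- The path algebra of a quiver over a field `K`, described axiomatically:
an algebra with a basis indexed by the paths, multiplying by concatenation. -/
structure PathAlg (K : Type) [Field K] (Q : QD) [Fintype Q.V] where
  P : Type
  [ringP : Ring P]
  [algP : Algebra K P]
  ι : {i j : Q.V} → Q.Path i j → P
  ι_comp : ∀ {i j k : Q.V} (p : Q.Path i j) (q : Q.Path j k), ι (p.comp q) = ι p * ι q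
  ι_ortho : ∀ {i j k l : Q.V} (p : Q.Path i j) (q : Q.Path k l), j ≠ k → ι p * ι q = 0
  sum_nil : (∑ i : Q.V, ι (QD.Path.nil i)) = 1
  li : LinearIndependent K (fun p : QD.PathIn Q => ι p.2.2)
  span_top : Submodule.span K (Set.range (fun p : QD.PathIn Q => ι p.2.2)) = ⊤

attribute [instance] PathAlg.ringP PathAlg.algP

section Main

variable (K : Type) [Field K] (Q : QD) [Fintype Q.V] [∀ i j : Q.V, Fintype (Q.Ar i j)]
variable (n : ℕ) (PA : PathAlg K Q)

/-- The relation whose `RingQuot` is the truncated quiver algebra `KΔ/R_Δ^n`: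
identify with `0` the image of every path of length at least `n`. -/
def truncRel : PA.P → PA.P → Prop := fun u v =>
  v = 0 ∧ ∃ p : QD.PathIn Q, n ≤ p.2.2.length ∧ u = PA.ι p.2.2

/-- The truncated quiver algebra `A = KΔ/R_Δ^n`. -/
abbrev TA : Type := RingQuot (truncRel K Q n PA)

/-- The class in `A = KΔ/R_Δ^n` of a path of `Δ`. -/
def cls {i j : Q.V} (p : Q.Path i j) : TA K Q n PA :=
  RingQuot.mkAlgHom K (truncRel K Q n PA) (PA.ι p)

/-- Index type for the canonical basis of the truncated algebra: paths of length `< n`. -/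
abbrev Short : Type := {p : QD.PathIn Q // p.2.2.length < n}

/-- The Jacobson radical of the truncated algebra. -/
def JradA : Ideal (TA K Q n PA) := Ideal.jacobson ⊥

/-- The socle of `A` as an `A`-bimodule: the two-sided annihilator of the radical,
viewed as a `K`-subspace. -/
def socA : Submodule K (TA K Q n PA) where
  carrier := {z | ∀ r ∈ JradA K Q n PA, r * z = 0 ∧ z * r = 0}
  add_mem' := by
    intro a b ha hb r hr
    exact ⟨by rw [mul_add, (ha r hr).1, (hb r hr).1, add_zero],
      by rw [add_mul, (ha r hr).2, (hb r hr).2, add_zero]⟩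
  zero_mem' := by intro r hr; simp
  smul_mem' := by
    intro c z hz r hr
    exact ⟨by rw [Algebra.mul_smul_comm, (hz r hr).1, smul_zero],
      by rw [Algebra.smul_mul_assoc, (hz r hr).2, smul_zero]⟩

variable (basA : Module.Basis (Short Q n) K (TA K Q n PA))

/-- The dual-basis functional `p̄^*` attached to a path `p` (zero if `p` is long). -/
def coordP (p : QD.PathIn Q) : Module.Dual K (TA K Q n PA) :=
  if h : p.2.2.length < n then basA.coord ⟨p, h⟩ else 0

variable (s : ℕ) [NeZero s] (w : ZMod s → Q.V) (x : ∀ i : ZMod s, Q.Ar (w i) (w (i + 1)))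

/-- The segment `x_i x_{i+1} ⋯ x_{i+m-1}` of the fixed basic cycle `γ = x_1 ⋯ x_s`. -/
def seg : (i : ZMod s) → (m : ℕ) → Q.Path (w i) (w (i + (m : ZMod s)))
  | i, 0 => cast (congrArg (fun v : ZMod s => Q.Path (w i) (w v)) (by push_cast; ring))
      (QD.Path.nil (w i))
  | i, m + 1 => cast (congrArg (fun v : ZMod s => Q.Path (w i) (w v)) (by push_cast; ring))
      (QD.Path.cons (x i) (seg (i + 1) m))

variable (k : K)

/-- The value `α_r(ā, b̄)` of the `r`-th summand of the `2`-cocycle attached to `γ`. -/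
def aTerm {i j l : Q.V} (a : Q.Path i j) (b : Q.Path j l) (r : ZMod s) :
    Module.Dual K (TA K Q n PA) :=
  if (cls K Q n PA a ≠ 0 ∧ cls K Q n PA b ≠ 0 ∧ n ≤ (a.comp b).length ∧ (a.comp b).length < s ∧
      (a.comp b).sig = (seg Q s w x r (a.comp b).length).sig) then
    coordP K Q n PA basA
      ((seg Q s w x (r + ((a.comp b).length : ZMod s)) (s - (a.comp b).length)).sig)
  else if (cls K Q n PA a ≠ 0 ∧ cls K Q n PA b ≠ 0 ∧ (a.comp b).length = s ∧
      (a.comp b).sig = (seg Q s w x r s).sig) then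
    coordP K Q n PA basA ((QD.Path.nil (w r)).sig)
  else 0

variable (αm : TA K Q n PA →ₗ[K] TA K Q n PA →ₗ[K] Module.Dual K (TA K Q n PA))
variable (t : ℕ) (pM : Fin t → QD.PathIn Q)

/-- The ordinary quiver of the Hochschild extension algebra: the quiver `Δ` together with
one extra arrow `y_{p_m} : t(p_m) → s(p_m)` for every `m`. -/
abbrev Qe : QD where
  V := Q.V
  Ar := fun i j => Q.Ar i j ⊕ {m : Fin t // (pM m).2.1 = i ∧ (pM m).1 = j}

/-- The inclusion of paths of `Δ` into paths of the extended quiver. -/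
def embed : {i j : Q.V} → Q.Path i j → (Qe Q t pM).Path i j
  | _, _, QD.Path.nil i => QD.Path.nil (Q := Qe Q t pM) i
  | _, _, QD.Path.cons a p => QD.Path.cons (Q := Qe Q t pM) (Sum.inl a) (embed p)

/-- The number of `y`-arrows occurring in a path of the extended quiver. -/
def numY : {i j : Q.V} → (Qe Q t pM).Path i j → ℕ
  | _, _, QD.Path.nil _ => 0
  | i, _, @QD.Path.cons _ _ j' _ a p =>
      (match (a : Q.Ar i j' ⊕ {m : Fin t // (pM m).2.1 = i ∧ (pM m).1 = j'}) with
        | Sum.inl _ => 0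
        | Sum.inr _ => 1) + numY p

/-- The arrow `y_{p_m}` of the extended quiver. -/
def yArr (m : Fin t) : (Qe Q t pM).Ar (pM m).2.1 (pM m).1 := Sum.inr ⟨m, rfl, rfl⟩

/-- `C` is an `α`-revived cycle of `Δ`. -/
def IsRev {h : Q.V} (C : Q.Path h h) : Prop :=
  ∃ (j : Q.V) (a : Q.Path h j) (b : Q.Path j h),
    0 < a.length ∧ 0 < b.length ∧ cls K Q n PA a ≠ 0 ∧ cls K Q n PA b ≠ 0 ∧
    C = a.comp b ∧ αm (cls K Q n PA a) (cls K Q n PA b) ≠ 0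

/-- `C` is an `α`-revived cycle, viewed inside the extended quiver. -/
def IsRevE {h : Q.V} (C : (Qe Q t pM).Path h h) : Prop :=
  ∃ C₀ : Q.Path h h, C = embed Q t pM C₀ ∧ IsRev K Q n PA αm C₀

/-- `C` is an elementary cycle of weight `wt`. -/
def IsElemW {h : Q.V} (C : (Qe Q t pM).Path h h) (wt : K) : Prop :=
  ∃ (m : Fin t) (δ₂ : Q.Path h (pM m).2.1) (δ₁ : Q.Path (pM m).1 h),
    C = (embed Q t pM δ₂).comp (QD.Path.cons (yArr Q t pM m) (embed Q t pM δ₁)) ∧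
    coordP K Q n PA basA (pM m) (cls K Q n PA (δ₁.comp δ₂)) = wt ∧ wt ≠ 0

/-- `C` is an elementary cycle. -/
def IsElem {h : Q.V} (C : (Qe Q t pM).Path h h) : Prop :=
  ∃ wt : K, IsElemW K Q n PA basA t pM C wt

/-- `C` is a nonzero cycle (elementary or `α`-revived) with weight `wt`. -/
def HasWt {h : Q.V} (C : (Qe Q t pM).Path h h) (wt : K) : Prop :=
  IsElemW K Q n PA basA t pM C wt ∨ (IsRevE K Q n PA αm t pM C ∧ wt = k)

/-- The left action of `A` on `D(A) = Hom_K(A, K)`: `(a · f)(z) = f(z * a)`. -/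
def dL (a : TA K Q n PA) (f : Module.Dual K (TA K Q n PA)) : Module.Dual K (TA K Q n PA) :=
  f ∘ₗ LinearMap.mulRight K a

/-- The right action of `A` on `D(A) = Hom_K(A, K)`: `(f · b)(z) = f(b * z)`. -/
def dR (f : Module.Dual K (TA K Q n PA)) (b : TA K Q n PA) : Module.Dual K (TA K Q n PA) :=
  f ∘ₗ LinearMap.mulLeft K b

variable (T : Type) [Ring T] [Algebra K T]
variable (eT : T ≃ₗ[K] TA K Q n PA × Module.Dual K (TA K Q n PA))
variable (PB : PathAlg K (Qe Q t pM))
variable (Φm : PB.P →ₐ[K] T)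

/-- `φ₁ = π₁ ∘ Φ`. -/
def ph1 (z : PB.P) : TA K Q n PA := (eT (Φm z)).1

/-- `φ₂ = π₂ ∘ Φ`. -/
def ph2 (z : PB.P) : Module.Dual K (TA K Q n PA) := (eT (Φm z)).2

/-- The primitive idempotent of `T` corresponding to a vertex. -/
def eV (i : Q.V) : T := eT.symm (cls K Q n PA (QD.Path.nil i), 0)

end Main

section Extra

variable (K : Type) [Field K] (Q : QD) [Fintype Q.V] [∀ i j : Q.V, Fintype (Q.Ar i j)]
variable (n : ℕ) (PA : PathAlg K Q)
variable (t : ℕ) (pM : Fin t → QD.PathIn Q)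
variable (T : Type) [Ring T] [Algebra K T]
variable (PB : PathAlg K (Qe Q t pM))
variable (Φm : PB.P →ₐ[K] T)

/-- The Jacobson radical of a ring. -/
def JT : Ideal T := Ideal.jacobson ⊥

/-- The Jacobson radical, viewed as a `K`-subspace. -/
def JTK : Submodule K T := Submodule.restrictScalars K (JT T)

/-- The square of the Jacobson radical, as a `K`-subspace. -/
def J2K : Submodule K T := JTK K T * JTK K T

/-- The number of arrows `i → j` in the Gabriel (ordinary) quiver of `T`,
i.e. `dim_K e_i (rad T / rad² T) e_j`. -/
def gabrielCount (ei ej : T) : ℕ :=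
  Module.finrank K
      ↥(Submodule.span K {y : T | ∃ z ∈ JT T, y = ei * z * ej} ⊔ J2K K T)
    - Module.finrank K ↥(J2K K T)

/-- `e` is a primitive idempotent. -/
def IsPrimIdem (e : T) : Prop :=
  e * e = e ∧ e ≠ 0 ∧
  ∀ f g : T, f * f = f → g * g = g → f * g = 0 → g * f = 0 → e = f + g → f = 0 ∨ g = 0

/-- `a` is an arrow of the ring `T` in the sense of Brenner:
`a ∈ rad T \ rad² T` and `a = x a y` for primitive idempotents `x, y`. -/
def IsArrowT (a : T) : Prop :=
  a ∈ JT T ∧ a ∉ J2K K T ∧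
  ∃ e f : T, IsPrimIdem T e ∧ IsPrimIdem T f ∧ a = e * a * f

/-- `rad (T e)`, a left submodule. -/
def radLe (e : T) : Submodule T T := Submodule.span T ((fun z => z * e) '' (JT T : Set T))

/-- `rad (e T)`, a right submodule. -/
def radRe (e : T) : Submodule Tᵐᵒᵖ T := Submodule.span Tᵐᵒᵖ ((fun z => e * z) '' (JT T : Set T))

/-- `Λ` is a complete set of arrows for `rad (T e)`. -/
def CompleteL (e : T) (Λ : Set T) : Prop :=
  (∀ a ∈ Λ, IsArrowT K T a) ∧ Submodule.span T Λ = radLe T e ∧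
  ∀ Λ' ⊂ Λ, Submodule.span T Λ' ≠ radLe T e

/-- `Γ` is a complete set of arrows for `rad (e T)`. -/
def CompleteR (e : T) (Γ : Set T) : Prop :=
  (∀ a ∈ Γ, IsArrowT K T a) ∧ Submodule.span Tᵐᵒᵖ Γ = radRe T e ∧
  ∀ Γ' ⊂ Γ, Submodule.span Tᵐᵒᵖ Γ' ≠ radRe T e

/-- `(N, nn) ∈ 𝒩` in the sense of Brenner, for the primitive idempotent `e`. -/
def mcN (e : T) (N nn : ℕ) : Prop :=
  ∃ Λ Γ : Fin (nn + 1) → Set T,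
    (∀ i : Fin (nn + 1), (i : ℕ) ≠ 0 → (Λ i).Nonempty ∧ (Γ i).Nonempty) ∧
    (∀ i j : Fin (nn + 1), i ≠ j → Λ i ∩ Λ j = ∅ ∧ Γ i ∩ Γ j = ∅) ∧
    CompleteL K T e (⋃ i, Λ i) ∧ CompleteR K T e (⋃ i, Γ i) ∧
    (∀ i j : Fin (nn + 1), (i ≠ j ∨ (i : ℕ) = 0 ∨ (j : ℕ) = 0) →
      ∀ a ∈ Λ i, ∀ b ∈ Γ j, a * b = 0) ∧
    N = nn + (Λ 0).ncard

/-- The set `𝒞_h` of oriented cycles at `h` of the extended quiver that are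
nonzero in the Hochschild extension algebra. -/
def Ch (h : Q.V) : Type :=
  {C : (Qe Q t pM).Path h h // 0 < C.length ∧ Φm (PB.ι C) ≠ 0}

/-- The relation `ℛ` on `𝒞_h`: the two cycles share an arrow which starts or ends at `h`. -/
def Rc (h : Q.V) (C C' : Ch K Q t pM T PB Φm h) : Prop :=
  ∃ (u v : Q.V) (a : (Qe Q t pM).Ar u v), (u = h ∨ v = h) ∧
    QD.Path.arrowMem a C.1 ∧ QD.Path.arrowMem a C'.1

/-- `card (𝒞_h / ≡)`, the number of equivalence classes of `𝒞_h` under the equivalence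
relation generated by `ℛ`. -/
def NCh (h : Q.V) : ℕ := Nat.card (Quot (Rc K Q t pM T PB Φm h))

/-- The set `𝒜_h` of arrows of the extended quiver ending at `h`. -/
def Ah (h : Q.V) : Type := Σ u : Q.V, (Qe Q t pM).Ar u h

/-- The relation `ℛ'` on `𝒜_h`: there is an arrow `b` with `ab ≠ 0 ≠ a'b` in `T_α(A)`. -/
def Ra (h : Q.V) (a a' : Ah Q t pM h) : Prop :=
  ∃ (v : Q.V) (b : (Qe Q t pM).Ar h v),
    Φm (PB.ι (QD.Path.cons a.2 (QD.Path.cons b (QD.Path.nil (Q := Qe Q t pM) v)))) ≠ 0 ∧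
    Φm (PB.ι (QD.Path.cons a'.2 (QD.Path.cons b (QD.Path.nil (Q := Qe Q t pM) v)))) ≠ 0

/-- `card (𝒜_h / ≈)`. -/
def NAh (h : Q.V) : ℕ := Nat.card (Quot (Ra K Q t pM T PB Φm h))

end Extra

/-- An `R`-module is indecomposable if it is nonzero and is not the internal direct
sum of two nonzero submodules. -/
def Indec (R M : Type) [Ring R] [AddCommGroup M] [Module R M] : Prop :=
  (⊥ : Submodule R M) ≠ ⊤ ∧ ∀ p q : Submodule R M, IsCompl p q → p = ⊥ ∨ q = ⊥


section Statements

variable (K : Type) [Field K] (Q : QD) [Fintype Q.V] [∀ i j : Q.V, Fintype (Q.Ar i j)]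
variable (n : ℕ) (PA : PathAlg K Q)
variable (basA : Module.Basis (Short Q n) K (TA K Q n PA))
variable (s : ℕ) [NeZero s] (w : ZMod s → Q.V) (x : ∀ i : ZMod s, Q.Ar (w i) (w (i + 1)))
variable (k : K)
variable (αm : TA K Q n PA →ₗ[K] TA K Q n PA →ₗ[K] Module.Dual K (TA K Q n PA))
variable (t : ℕ) (pM : Fin t → QD.PathIn Q)
variable (T : Type) [Ring T] [Algebra K T]
variable (eT : T ≃ₗ[K] TA K Q n PA × Module.Dual K (TA K Q n PA))
variable (PB : PathAlg K (Qe Q t pM))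
variable (Φm : PB.P →ₐ[K] T)

/-! ### Auxiliary lemmas -/

lemma aux_len_comp {i j l : Q.V} (p : Q.Path i j) (q : Q.Path j l) :
    (p.comp q).length = p.length + q.length := by
  induction p with
  | nil => simp [QD.Path.comp, QD.Path.length]
  | cons a p ih => simp [QD.Path.comp, QD.Path.length, ih]; omega

lemma aux_sig_nil {i j : Q.V} (p : Q.Path i j) (hp : p.length = 0) :
    p.sig = (QD.Path.nil (Q := Q) i).sig := by
  cases p with
  | nil => rfl
  | cons a q => simp [QD.Path.length] at hp

lemma aux_cls_comp {i j l : Q.V} (p : Q.Path i j) (q : Q.Path j l) :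
    cls K Q n PA (p.comp q) = cls K Q n PA p * cls K Q n PA q := by
  unfold cls; rw [PA.ι_comp, map_mul]

lemma aux_cls_ortho {i j l l' : Q.V} (p : Q.Path i j) (q : Q.Path l l') (hjl : j ≠ l) :
    cls K Q n PA p * cls K Q n PA q = 0 := by
  unfold cls; rw [← map_mul, PA.ι_ortho p q hjl, map_zero]

lemma aux_cls_long {i j : Q.V} (p : Q.Path i j) (hp : n ≤ p.length) :
    cls K Q n PA p = 0 := by
  have hrel : truncRel K Q n PA (PA.ι p) 0 := ⟨rfl, ⟨i, j, p⟩, hp, rfl⟩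
  have := RingQuot.mkAlgHom_rel K hrel
  unfold cls
  rw [this, map_zero]

lemma aux_cls_short_ne (hbas : ∀ sp : Short Q n, basA sp = cls K Q n PA sp.1.2.2)
    {i j : Q.V} (p : Q.Path i j) (hp : p.length < n) :
    cls K Q n PA p ≠ 0 := by
  have : basA ⟨⟨i, j, p⟩, hp⟩ = cls K Q n PA p := hbas ⟨⟨i, j, p⟩, hp⟩
  rw [← this]
  exact basA.ne_zero _

lemma aux_cls_lt (hbas : ∀ sp : Short Q n, basA sp = cls K Q n PA sp.1.2.2)
    {i j : Q.V} (p : Q.Path i j) (hp : cls K Q n PA p ≠ 0) : p.length < n := by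
  by_contra hge
  exact hp (aux_cls_long K Q n PA p (le_of_not_gt hge))

lemma aux_cls_cycle (hcyc : ∀ (i : Q.V) (p : Q.Path i i), 0 < p.length → cls K Q n PA p = 0)
    {i j : Q.V} (p : Q.Path i j) (e : i = j) (hp : 0 < p.length) :
    cls K Q n PA p = 0 := by
  subst e; exact hcyc i p hp

lemma aux_coordP_cls (hbas : ∀ sp : Short Q n, basA sp = cls K Q n PA sp.1.2.2)
    (p : QD.PathIn Q) (hp : p.2.2.length < n) {i j : Q.V} (u : Q.Path i j)
    (hu : u.length < n) :
    coordP K Q n PA basA p (cls K Q n PA u) = if p = u.sig then 1 else 0 := by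
  have hcu : cls K Q n PA u = basA ⟨⟨i, j, u⟩, hu⟩ := (hbas ⟨⟨i, j, u⟩, hu⟩).symm
  rw [coordP, dif_pos hp, hcu, Module.Basis.coord_apply, Module.Basis.repr_self, Finsupp.single_apply]
  by_cases hpq : p = u.sig
  · rw [if_pos, if_pos hpq]
    exact Subtype.ext hpq.symm
  · rw [if_neg, if_neg hpq]
    intro hc
    exact hpq (congrArg Subtype.val hc).symm

lemma aux_len_cast {u : Q.V} {v v' : ZMod s} (e : v = v') (p : Q.Path u (w v)) :
    (cast (congrArg (fun z : ZMod s => Q.Path u (w z)) e) p).length = p.length := by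
  subst e; rfl

lemma aux_seg_length (i : ZMod s) (m : ℕ) : (seg Q s w x i m).length = m := by
  induction m generalizing i with
  | zero =>
    rw [seg, aux_len_cast]
    · rfl
    · push_cast; ring
  | succ m ih =>
    rw [seg, aux_len_cast]
    · simp [QD.Path.length, ih]
    · push_cast; ring

lemma aux_embed_comp {i j l : Q.V} (p : Q.Path i j) (q : Q.Path j l) :
    embed Q t pM (p.comp q) = (embed Q t pM p).comp (embed Q t pM q) := by
  induction p with
  | nil => rfl
  | cons a p ih => simp [QD.Path.comp, embed, ih]

lemma aux_aTerm_short {i j l : Q.V} (a : Q.Path i j) (b : Q.Path j l)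
    (hs1 : n + 1 ≤ s) (hlen : (a.comp b).length < n) (r : ZMod s) :
    aTerm K Q n PA basA s w x a b r = 0 := by
  rw [aTerm, if_neg, if_neg]
  · rintro ⟨-, -, h3, -⟩; omega
  · rintro ⟨-, -, h3, -⟩; omega

lemma aux_eTsymm_mul
    (hTmul : ∀ u v : T, eT (u * v) = ((eT u).1 * (eT v).1,
      dL K Q n PA (eT u).1 (eT v).2 + dR K Q n PA (eT u).2 (eT v).1 + αm (eT u).1 (eT v).1))
    (z z' : TA K Q n PA × Module.Dual K (TA K Q n PA)) :
    eT.symm z * eT.symm z' = eT.symm (z.1 * z'.1,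
      dL K Q n PA z.1 z'.2 + dR K Q n PA z.2 z'.1 + αm z.1 z'.1) := by
  apply eT.injective
  rw [hTmul, eT.apply_symm_apply, eT.apply_symm_apply, eT.apply_symm_apply]

lemma aux_dL_zero (a : TA K Q n PA) : dL K Q n PA a 0 = 0 := LinearMap.zero_comp _

lemma aux_dR_zero (b : TA K Q n PA) : dR K Q n PA 0 b = 0 := LinearMap.zero_comp _

lemma aux_phi_embed
    (hbas : ∀ sp : Short Q n, basA sp = cls K Q n PA sp.1.2.2)
    (hs1 : n + 1 ≤ s)
    (hα : ∀ {i j l : Q.V} (a : Q.Path i j) (b : Q.Path j l),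
      αm (cls K Q n PA a) (cls K Q n PA b) =
        k • ∑ r : ZMod s, aTerm K Q n PA basA s w x a b r)
    (hTmul : ∀ u v : T, eT (u * v) = ((eT u).1 * (eT v).1,
      dL K Q n PA (eT u).1 (eT v).2 + dR K Q n PA (eT u).2 (eT v).1 + αm (eT u).1 (eT v).1))
    (hΦnil : ∀ i : Q.V, Φm (PB.ι (QD.Path.nil (Q := Qe Q t pM) i))
      = eT.symm (cls K Q n PA (QD.Path.nil i), 0))
    (hΦarr : ∀ {i j : Q.V} (a : Q.Ar i j),
      Φm (PB.ι (QD.Path.cons (Sum.inl a) (QD.Path.nil (Q := Qe Q t pM) j)))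
      = eT.symm (cls K Q n PA (QD.Path.cons a (QD.Path.nil j)), 0))
    {i j : Q.V} (p : Q.Path i j) (hp : p.length < n) :
    Φm (PB.ι (embed Q t pM p)) = eT.symm (cls K Q n PA p, 0) := by
  induction p with
  | nil => exact hΦnil _
  | cons a q ih =>
    have hq : q.length < n := by
      simp only [QD.Path.length] at hp; omega
    have hsplit : embed Q t pM (QD.Path.cons a q)
        = (QD.Path.cons (Sum.inl a) (QD.Path.nil (Q := Qe Q t pM) _)).comp
            (embed Q t pM q) := rfl
    rw [hsplit, PB.ι_comp, map_mul, hΦarr, ih hq,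
      aux_eTsymm_mul K Q n PA αm T eT hTmul]
    have hzero : αm (cls K Q n PA (QD.Path.cons a (QD.Path.nil _))) (cls K Q n PA q) = 0 := by
      rw [hα]
      have : ∀ r : ZMod s,
          aTerm K Q n PA basA s w x (QD.Path.cons a (QD.Path.nil _)) q r = 0 := by
        intro r
        apply aux_aTerm_short K Q n PA basA s w x _ _ hs1
        have : ((QD.Path.cons a (QD.Path.nil _)).comp q).length
            = (QD.Path.cons a q).length := rfl
        rw [this]; exact hp
      rw [Finset.sum_congr rfl (fun r _ => this r), Finset.sum_const_zero, smul_zero]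
    have hcomp : cls K Q n PA (QD.Path.cons a (QD.Path.nil _)) * cls K Q n PA q
        = cls K Q n PA (QD.Path.cons a q) := by
      rw [← aux_cls_comp]
      rfl
    simp only [hzero, hcomp, aux_dL_zero, aux_dR_zero, add_zero, zero_add]


/-- for an elementary or `α`-revived cycle `C` with origin `h` and weight
`wt`, `φ₂(C)(ē_h) = w(C)` and `φ₂(C)(ū) = 0` for every path `u ≠ e_h` of `KΔ`. -/
theorem stmt7
    [IsAlgClosed K]
    (hn : 2 ≤ n)
    (hdim : 1 < Module.finrank K (TA K Q n PA))
    (hconn : ∀ i j : Q.V,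
      Relation.EqvGen (fun u v : Q.V => Nonempty (Q.Ar u v) ∨ Nonempty (Q.Ar v u)) i j)
    (hcyc : ∀ (i : Q.V) (p : Q.Path i i), 0 < p.length → cls K Q n PA p = 0)
    (hbas : ∀ sp : Short Q n, basA sp = cls K Q n PA sp.1.2.2)
    (hs1 : n + 1 ≤ s) (hs2 : s ≤ 2 * n - 2)
    (hk : k ≠ 0)
    (hα : ∀ {i j l : Q.V} (a : Q.Path i j) (b : Q.Path j l),
      αm (cls K Q n PA a) (cls K Q n PA b) =
        k • ∑ r : ZMod s, aTerm K Q n PA basA s w x a b r)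
    (hcoc : ∀ a b c : TA K Q n PA,
      dL K Q n PA a (αm b c) + αm a (b * c) = αm (a * b) c + dR K Q n PA (αm a b) c)
    (hMlt : ∀ m : Fin t, (pM m).2.2.length < n)
    (hMli : LinearIndependent K fun m : Fin t => cls K Q n PA (pM m).2.2)
    (hMsp : Submodule.span K (Set.range fun m : Fin t => cls K Q n PA (pM m).2.2)
      = socA K Q n PA)
    (hTmul : ∀ u v : T, eT (u * v) = ((eT u).1 * (eT v).1,
      dL K Q n PA (eT u).1 (eT v).2 + dR K Q n PA (eT u).2 (eT v).1 + αm (eT u).1 (eT v).1))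
    (hTone : eT 1 = (1, 0))
    (hΦnil : ∀ i : Q.V, Φm (PB.ι (QD.Path.nil (Q := Qe Q t pM) i))
      = eT.symm (cls K Q n PA (QD.Path.nil i), 0))
    (hΦarr : ∀ {i j : Q.V} (a : Q.Ar i j),
      Φm (PB.ι (QD.Path.cons (Sum.inl a) (QD.Path.nil (Q := Qe Q t pM) j)))
      = eT.symm (cls K Q n PA (QD.Path.cons a (QD.Path.nil j)), 0))
    (hΦy : ∀ m : Fin t,
      Φm (PB.ι (QD.Path.cons (yArr Q t pM m) (QD.Path.nil (Q := Qe Q t pM) (pM m).1)))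
      = eT.symm (0, coordP K Q n PA basA (pM m)))
    (hΦsurj : Function.Surjective Φm)
    {h : Q.V} (C : (Qe Q t pM).Path h h) (wt : K)
    (hC : HasWt K Q n PA basA k αm t pM C wt) :
    ph2 K Q n PA t pM T eT PB Φm (PB.ι C) (cls K Q n PA (QD.Path.nil h)) = wt ∧
    ∀ {i' j' : Q.V} (u : Q.Path i' j'), u.sig ≠ (QD.Path.nil (Q := Q) h).sig →
      ph2 K Q n PA t pM T eT PB Φm (PB.ι C) (cls K Q n PA u) = 0 := by
  have hph2 : ∀ z : PB.P, ph2 K Q n PA t pM T eT PB Φm z = (eT (Φm z)).2 := fun z => rfl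
  obtain hE | ⟨⟨C₀, rfl, hrev⟩, hwtk⟩ := hC
  on_goal 2 => subst wt
  · -- elementary cycle
    obtain ⟨m, δ₂, δ₁, rfl, hwt, hw0⟩ := hE
    have hshort : (δ₁.comp δ₂).length < n := by
      by_contra hge
      rw [aux_cls_long K Q n PA _ (le_of_not_gt hge), map_zero] at hwt
      exact hw0 hwt.symm
    have hlc := aux_len_comp Q δ₁ δ₂
    have h1 : δ₁.length < n := by omega
    have h2 : δ₂.length < n := by omega
    have e1 := aux_phi_embed K Q n PA basA s w x k αm t pM T eT PB Φm hbas hs1 hα hTmul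
      hΦnil hΦarr δ₁ h1
    have e2 := aux_phi_embed K Q n PA basA s w x k αm t pM T eT PB Φm hbas hs1 hα hTmul
      hΦnil hΦarr δ₂ h2
    have key : Φm (PB.ι ((embed Q t pM δ₂).comp
          (QD.Path.cons (yArr Q t pM m) (embed Q t pM δ₁))))
        = eT.symm (0, dL K Q n PA (cls K Q n PA δ₂)
            (dR K Q n PA (coordP K Q n PA basA (pM m)) (cls K Q n PA δ₁))) := by
      have hsp : QD.Path.cons (yArr Q t pM m) (embed Q t pM δ₁)
          = (QD.Path.cons (yArr Q t pM m)
              (QD.Path.nil (Q := Qe Q t pM) (pM m).1)).comp (embed Q t pM δ₁) := rfl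
      rw [PB.ι_comp, hsp, PB.ι_comp, map_mul, map_mul, e1, e2, hΦy m,
        aux_eTsymm_mul K Q n PA αm T eT hTmul, aux_eTsymm_mul K Q n PA αm T eT hTmul]
      simp only [zero_mul, mul_zero, map_zero, LinearMap.zero_apply, aux_dL_zero,
        aux_dR_zero, add_zero, zero_add]
    constructor
    · rw [hph2, key, eT.apply_symm_apply]
      simp only [dL, dR, LinearMap.comp_apply, LinearMap.mulRight_apply,
        LinearMap.mulLeft_apply]
      rw [← aux_cls_comp K Q n PA (QD.Path.nil h) δ₂]
      have hniil : (QD.Path.nil (Q := Q) h).comp δ₂ = δ₂ := rfl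
      rw [hniil, ← aux_cls_comp K Q n PA δ₁ δ₂]
      exact hwt
    · intro i' j' u hu
      rw [hph2, key, eT.apply_symm_apply]
      simp only [dL, dR, LinearMap.comp_apply, LinearMap.mulRight_apply,
        LinearMap.mulLeft_apply]
      by_cases hi : i' = h
      · subst hi
        by_cases hj : j' = i'
        · subst hj
          rcases Nat.eq_zero_or_pos u.length with hz | hpos
          · exact absurd (aux_sig_nil Q u hz) hu
          · rw [aux_cls_cycle K Q n PA hcyc u rfl hpos, zero_mul, mul_zero, map_zero]
        · rw [aux_cls_ortho K Q n PA u δ₂ hj, mul_zero, map_zero]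
      · rw [← mul_assoc, aux_cls_ortho K Q n PA δ₁ u (fun e => hi e.symm), zero_mul,
          map_zero]
  · -- α-revived cycle
    obtain ⟨jv, a, b, ha0, hb0, hane, hbne, hC0, hαne⟩ := hrev
    subst hC0
    have hla : a.length < n := aux_cls_lt K Q n PA basA hbas a hane
    have hlb : b.length < n := aux_cls_lt K Q n PA basA hbas b hbne
    have hlcomp := aux_len_comp Q a b
    have habcls : cls K Q n PA (a.comp b) = 0 :=
      aux_cls_cycle K Q n PA hcyc _ rfl (by omega)
    have ea := aux_phi_embed K Q n PA basA s w x k αm t pM T eT PB Φm hbas hs1 hα hTmul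
      hΦnil hΦarr a hla
    have eb := aux_phi_embed K Q n PA basA s w x k αm t pM T eT PB Φm hbas hs1 hα hTmul
      hΦnil hΦarr b hlb
    have hmulz : cls K Q n PA a * cls K Q n PA b = 0 := by
      rw [← aux_cls_comp]; exact habcls
    have key : Φm (PB.ι (embed Q t pM (a.comp b)))
        = eT.symm (0, αm (cls K Q n PA a) (cls K Q n PA b)) := by
      rw [aux_embed_comp, PB.ι_comp, map_mul, ea, eb,
        aux_eTsymm_mul K Q n PA αm T eT hTmul]
      simp only [hmulz, aux_dL_zero, aux_dR_zero, add_zero, zero_add]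
    have hlen_ge : n ≤ (a.comp b).length := by
      by_contra hlt
      exact aux_cls_short_ne K Q n PA basA hbas _ (lt_of_not_ge hlt) habcls
    have hbr1 : ∀ r : ZMod s, ¬ (cls K Q n PA a ≠ 0 ∧ cls K Q n PA b ≠ 0 ∧
        n ≤ (a.comp b).length ∧ (a.comp b).length < s ∧
        (a.comp b).sig = (seg Q s w x r ((a.comp b).length)).sig) := by
      rintro r ⟨-, -, -, hlts, hsig⟩
      have hv1 : h = w r := congrArg (fun z : QD.PathIn Q => z.1) hsig
      have hv2 : h = w (r + (((a.comp b).length : ℕ) : ZMod s)) :=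
        congrArg (fun z : QD.PathIn Q => z.2.1) hsig
      have hscast : ((s - (a.comp b).length : ℕ) : ZMod s)
          = - (((a.comp b).length : ℕ) : ZMod s) := by
        rw [Nat.cast_sub (le_of_lt hlts), ZMod.natCast_self, zero_sub]
      have har : r + (((a.comp b).length : ℕ) : ZMod s)
          + ((s - (a.comp b).length : ℕ) : ZMod s) = r := by
        rw [hscast]; ring
      have e : w (r + (((a.comp b).length : ℕ) : ZMod s))
          = w (r + (((a.comp b).length : ℕ) : ZMod s)
              + ((s - (a.comp b).length : ℕ) : ZMod s)) := by
        rw [har, ← hv1, ← hv2]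
      have hq0 : cls K Q n PA
          (seg Q s w x (r + (((a.comp b).length : ℕ) : ZMod s)) (s - (a.comp b).length))
          = 0 :=
        aux_cls_cycle K Q n PA hcyc _ e (by rw [aux_seg_length]; omega)
      exact aux_cls_short_ne K Q n PA basA hbas _ (by rw [aux_seg_length]; omega) hq0
    have haT : ∀ r : ZMod s, aTerm K Q n PA basA s w x a b r =
        if (cls K Q n PA a ≠ 0 ∧ cls K Q n PA b ≠ 0 ∧ (a.comp b).length = s ∧
            (a.comp b).sig = (seg Q s w x r s).sig) then
          coordP K Q n PA basA ((QD.Path.nil (Q := Q) (w r)).sig) else 0 := by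
      intro r; rw [aTerm, if_neg (hbr1 r)]
    have hsum := hα a b
    have hex : ∃ r : ZMod s, (a.comp b).length = s ∧
        (a.comp b).sig = (seg Q s w x r s).sig := by
      by_contra hno
      push_neg at hno
      apply hαne
      rw [hsum]
      have hz : ∀ r : ZMod s, aTerm K Q n PA basA s w x a b r = 0 := by
        intro r
        rw [haT r, if_neg]
        rintro ⟨-, -, h3, h4⟩
        exact hno r h3 h4
      rw [Finset.sum_congr rfl (fun r _ => hz r), Finset.sum_const_zero, smul_zero]
    obtain ⟨r₀, hlen_s, hsig₀⟩ := hex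
    have huniq : ∀ r : ZMod s, (a.comp b).sig = (seg Q s w x r s).sig → r = r₀ := by
      intro r hr
      by_contra hne
      have hv1 : h = w r := congrArg (fun z : QD.PathIn Q => z.1) hr
      have hv1' : h = w r₀ := congrArg (fun z : QD.PathIn Q => z.1) hsig₀
      have hd0 : r₀ - r ≠ 0 := sub_ne_zero.mpr (Ne.symm hne)
      have hdval : 0 < (r₀ - r).val :=
        Nat.pos_of_ne_zero (fun hz => hd0 ((ZMod.val_eq_zero (r₀ - r)).mp hz))
      have hdlt : (r₀ - r).val < s := ZMod.val_lt (r₀ - r)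
      have hcast : (((r₀ - r).val : ℕ) : ZMod s) = r₀ - r :=
        ZMod.natCast_rightInverse (r₀ - r)
      have e1 : w r = w (r + (((r₀ - r).val : ℕ) : ZMod s)) := by
        rw [hcast, show r + (r₀ - r) = r₀ by ring, ← hv1, ← hv1']
      have hnegval : (-(r₀ - r)).val = s - (r₀ - r).val := by
        rw [ZMod.neg_val, if_neg hd0]
      have hcast2 : ((((-(r₀ - r)).val) : ℕ) : ZMod s) = -(r₀ - r) :=
        ZMod.natCast_rightInverse (-(r₀ - r))
      have e2 : w r₀ = w (r₀ + ((((-(r₀ - r)).val) : ℕ) : ZMod s)) := by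
        rw [hcast2, show r₀ + -(r₀ - r) = r by ring, ← hv1, ← hv1']
      rcases lt_or_ge (r₀ - r).val n with hlt | hge
      · exact aux_cls_short_ne K Q n PA basA hbas _ (by rw [aux_seg_length]; omega)
          (aux_cls_cycle K Q n PA hcyc (seg Q s w x r (r₀ - r).val) e1
            (by rw [aux_seg_length]; omega))
      · exact aux_cls_short_ne K Q n PA basA hbas _
          (by rw [aux_seg_length, hnegval]; omega)
          (aux_cls_cycle K Q n PA hcyc (seg Q s w x r₀ ((-(r₀ - r)).val)) e2
            (by rw [aux_seg_length, hnegval]; omega))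
    have hsumval : (∑ r : ZMod s, aTerm K Q n PA basA s w x a b r)
        = coordP K Q n PA basA ((QD.Path.nil (Q := Q) h).sig) := by
      rw [Finset.sum_eq_single r₀]
      · rw [haT r₀, if_pos ⟨hane, hbne, hlen_s, hsig₀⟩]
        have hw : w r₀ = h := (congrArg (fun z : QD.PathIn Q => z.1) hsig₀).symm
        exact congrArg (fun v => coordP K Q n PA basA ((QD.Path.nil (Q := Q) v).sig)) hw
      · intro r _ hner
        rw [haT r, if_neg]
        rintro ⟨-, -, -, h4⟩
        exact hner (huniq r h4)
      · intro habs
        exact absurd (Finset.mem_univ r₀) habs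
    have hαval : αm (cls K Q n PA a) (cls K Q n PA b)
        = k • coordP K Q n PA basA ((QD.Path.nil (Q := Q) h).sig) := by
      rw [hsum, hsumval]
    have hnil_lt : ((QD.Path.nil (Q := Q) h).sig).2.2.length < n := by
      show (QD.Path.nil (Q := Q) h).length < n
      simp [QD.Path.length]; omega
    constructor
    · rw [hph2, key, eT.apply_symm_apply, hαval, LinearMap.smul_apply,
        aux_coordP_cls K Q n PA basA hbas _ hnil_lt (QD.Path.nil h)
          (by simp [QD.Path.length]; omega),
        if_pos rfl, smul_eq_mul, mul_one]
    · intro i' j' u hu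
      rw [hph2, key, eT.apply_symm_apply, hαval, LinearMap.smul_apply]
      by_cases hul : u.length < n
      · rw [aux_coordP_cls K Q n PA basA hbas _ hnil_lt u hul,
          if_neg (fun e => hu e.symm), smul_zero]
      · rw [aux_cls_long K Q n PA u (le_of_not_gt hul), map_zero, smul_zero]


end Statements
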